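/- arXiv:1701.07660 — 2 statements merged into one kernel-verified Lean document; each statement's English description precedes it below -/
import Mathlib

section
/- In the setting of the randomized Feynman–Kac representation with $f \equiv h$ independent of $u$: the estimator $\Phi = \frac{\mathbf{1}_{\{\tau \ge T\}}}{\bar F(T)} g(X_T) + \frac{\mathbf{1}_{\{\tau < T\}}}{\rho(\tau)} h(\tau, X_\tau)$ has finite variance whenever $g$ and $h$ are bounded, $\bar F(T) > 0$, and $\int_0^T \frac{dt}{\rho(t)} < \infty$; in particular its second moment is bounded by $\frac{\|g\|_\infty^2}{\bar F(T)} + \|h\|_\infty^2 \int_0^T \frac{dt}{\rho(t)}$. -/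
open MeasureTheory ProbabilityTheory Matrix ENNReal Set

/-! Bound the integrand pointwise by `Ch² / ρ(s)²` before `T` and by `Cg² / F̄(T)²` after it
(the inner Gaussian integrals are averages of functions bounded by `Ch²`, resp. `Cg²`).
Against the density `ρ`, the first bound integrates to `Ch² ∫₀ᵀ ds / ρ(s)` and the second to
`Cg² F̄(T) / F̄(T)² = Cg² / F̄(T)`. -/

noncomputable def gaussPi (d : ℕ) (t : ℝ) : Measure (Fin d → ℝ) :=
  Measure.pi fun _ => gaussianReal 0 t.toNNReal

instance isProbabilityMeasure_gaussPi (d : ℕ) (t : ℝ) : IsProbabilityMeasure (gaussPi d t) := by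
  unfold gaussPi; infer_instance

-- Holds also for `a = 0`, where both sides are junk values `0`.
theorem mul_div_sq_self {K : Type*} [Field K] (a c : K) : a * (c / a ^ 2) = c / a := by
  obtain rfl | ha := eq_or_ne a 0
  · simp
  · field_simp

theorem integral_sq_le_sq_of_abs_le {Ω : Type*} [MeasurableSpace Ω] {P : Measure Ω}
    [IsProbabilityMeasure P] {f : Ω → ℝ} {C : ℝ} (hf : ∀ ω, |f ω| ≤ C) :
    ∫ ω, f ω ^ 2 ∂P ≤ C ^ 2 := by
  have hsq : ∀ ω, f ω ^ 2 ≤ C ^ 2 := fun ω =>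
    (sq_abs (f ω)).symm.le.trans (pow_le_pow_left₀ (abs_nonneg _) (hf ω) 2)
  calc ∫ ω, f ω ^ 2 ∂P ≤ ∫ _, C ^ 2 ∂P :=
        integral_mono_of_nonneg (ae_of_all _ fun ω => sq_nonneg _) (integrable_const _)
          (ae_of_all _ hsq)
    _ = C ^ 2 := by simp

section WithDensity

variable {α : Type*} [MeasurableSpace α] {μ : Measure α} {ρ : α → ℝ}

theorem integrable_withDensity_ofReal_iff (hρm : Measurable ρ) (hρ : 0 ≤ᵐ[μ] ρ) {f : α → ℝ} :
    Integrable f (μ.withDensity fun a => ENNReal.ofReal (ρ a)) ↔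
      Integrable (fun a => ρ a * f a) μ := by
  change Integrable f (μ.withDensity fun a => ((ρ a).toNNReal : ℝ≥0∞)) ↔ _
  rw [integrable_withDensity_iff_integrable_smul hρm.real_toNNReal]
  refine integrable_congr (hρ.mono fun a ha => ?_)
  simp [NNReal.smul_def, Real.coe_toNNReal _ ha]

theorem integral_withDensity_ofReal (hρm : Measurable ρ) (hρ : 0 ≤ᵐ[μ] ρ) (f : α → ℝ) :
    ∫ a, f a ∂(μ.withDensity fun a => ENNReal.ofReal (ρ a)) = ∫ a, ρ a * f a ∂μ := by
  change ∫ a, f a ∂(μ.withDensity fun a => ((ρ a).toNNReal : ℝ≥0∞)) = _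
  rw [integral_withDensity_eq_integral_smul hρm.real_toNNReal]
  refine integral_congr_ae (hρ.mono fun a ha => ?_)
  simp [NNReal.smul_def, Real.coe_toNNReal _ ha]

end WithDensity

section Splitting

variable {f g : ℝ → ℝ} {a T : ℝ}

theorem integrableOn_Ioi_ite_lt (haT : a < T) (hf : IntegrableOn f (Ioc a T))
    (hg : IntegrableOn g (Ioi T)) :
    IntegrableOn (fun s => if s < T then f s else g s) (Ioi a) := by
  rw [← Ioo_union_Ici_eq_Ioi haT]
  refine IntegrableOn.union ?_ ?_
  · exact (hf.mono_set Ioo_subset_Ioc_self).congr_fun (fun s hs => by simp [hs.2])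
      measurableSet_Ioo
  · exact ((integrableOn_Ici_iff_integrableOn_Ioi (by finiteness)).mpr hg).congr_fun
      (fun s hs => by simp [not_lt.mpr (mem_Ici.mp hs)]) measurableSet_Ici

theorem setIntegral_Ioi_ite_lt (haT : a < T) (hf : IntegrableOn f (Ioc a T))
    (hg : IntegrableOn g (Ioi T)) :
    ∫ s in Ioi a, (if s < T then f s else g s) = (∫ s in Ioc a T, f s) + ∫ s in Ioi T, g s := by
  have hint := integrableOn_Ioi_ite_lt haT hf hg
  rw [← Ioo_union_Ici_eq_Ioi haT] at hint ⊢
  rw [setIntegral_union ((Iio_disjoint_Ici le_rfl).mono_left Ioo_subset_Iio_self) measurableSet_Ici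
      (hint.mono_set subset_union_left) (hint.mono_set subset_union_right),
    integral_Ioc_eq_integral_Ioo, ← integral_Ici_eq_integral_Ioi]
  rw [setIntegral_congr_fun measurableSet_Ioo fun s hs => if_pos hs.2,
    setIntegral_congr_fun measurableSet_Ici fun s hs => if_neg (not_lt.mpr hs)]

end Splitting

theorem stmt12_general (d : ℕ) (σ₀ : Matrix (Fin d) (Fin d) ℝ)
    (μ x : Fin d → ℝ) (T : ℝ) (hT : 0 < T)
    (g : (Fin d → ℝ) → ℝ) (Cg : ℝ) (hgb : ∀ y, |g y| ≤ Cg)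
    (h : ℝ → (Fin d → ℝ) → ℝ)
    (Ch : ℝ) (hhb : ∀ s y, |h s y| ≤ Ch)
    (ρ : ℝ → ℝ) (hρm : Measurable ρ)
    (hρnn : ∀ s > (0:ℝ), 0 ≤ ρ s)
    (hρint : IntegrableOn (fun s => 1 / ρ s) (Set.Ioc 0 T))
    (ν : Measure ℝ)
    (hν : ν = (volume.restrict (Set.Ioi 0)).withDensity fun s => ENNReal.ofReal (ρ s))
    (Fbar : ℝ → ℝ) (hFbar : ∀ t, Fbar t = ∫ s in Set.Ioi t, ρ s)
    (hFT : 0 < Fbar T) :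
    ∫ s,
      (if s < T then
        (1 / ρ s ^ 2) * ∫ w, (h s (x + s • μ + σ₀ *ᵥ w)) ^ 2 ∂(gaussPi d s)
       else
        (1 / Fbar T ^ 2) * ∫ w, (g (x + T • μ + σ₀ *ᵥ w)) ^ 2 ∂(gaussPi d T)) ∂ν
      ≤ Cg ^ 2 / Fbar T + Ch ^ 2 * ∫ s in Set.Ioc (0:ℝ) T, 1 / ρ s := by
  have hρ_ae : 0 ≤ᵐ[volume.restrict (Ioi 0)] ρ := ae_restrict_of_forall_mem measurableSet_Ioi hρnn
  have hρ_tail : IntegrableOn ρ (Ioi T) := .of_integral_ne_zero (hFbar T ▸ hFT.ne')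
  set B : ℝ → ℝ := fun s => if s < T then Ch ^ 2 / ρ s ^ 2 else Cg ^ 2 / Fbar T ^ 2 with hB
  have hρB : (fun s => ρ s * B s) =
      fun s => if s < T then Ch ^ 2 * (1 / ρ s) else Cg ^ 2 / Fbar T ^ 2 * ρ s := by
    funext s
    simp only [hB]
    split_ifs
    · rw [mul_div_sq_self, mul_one_div]
    · ring
  have hB_int : Integrable B ν := by
    rw [hν, integrable_withDensity_ofReal_iff hρm hρ_ae, hρB]
    exact integrableOn_Ioi_ite_lt hT (hρint.const_mul _) (hρ_tail.const_mul _)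
  have hB_val : ∫ s, B s ∂ν = Cg ^ 2 / Fbar T + Ch ^ 2 * ∫ s in Ioc 0 T, 1 / ρ s := by
    rw [hν, integral_withDensity_ofReal hρm hρ_ae, hρB,
      setIntegral_Ioi_ite_lt hT (hρint.const_mul _) (hρ_tail.const_mul _), integral_const_mul,
      integral_const_mul, ← hFbar T, mul_comm _ (Fbar T), mul_div_sq_self, add_comm]
  refine (integral_mono_of_nonneg (ae_of_all _ fun s => ?_) hB_int
    (ae_of_all _ fun s => ?_)).trans_eq hB_val
  · split_ifs <;> exact mul_nonneg (by positivity) (integral_nonneg fun w => sq_nonneg _)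
  · simp only [hB]
    split_ifs
    · rw [one_div_mul_eq_div]
      gcongr
      exact integral_sq_le_sq_of_abs_le fun w => hhb s _
    · rw [one_div_mul_eq_div]
      gcongr
      exact integral_sq_le_sq_of_abs_le fun w => hgb _

/-- Finite variance of the one-draw randomized Feynman–Kac estimator
`Φ = 1_{τ≥T} g(X_T)/F̄(T) + 1_{τ<T} h(τ,X_τ)/ρ(τ)`: its second moment is bounded by
`‖g‖²_∞ / F̄(T) + ‖h‖²_∞ ∫₀ᵀ dt/ρ(t)`. -/
theorem stmt12 (d : ℕ) (σ₀ : Matrix (Fin d) (Fin d) ℝ)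
    (μ x : Fin d → ℝ) (T : ℝ) (hT : 0 < T)
    (g : (Fin d → ℝ) → ℝ) (hgm : Measurable g) (Cg : ℝ) (hgb : ∀ y, |g y| ≤ Cg)
    (h : ℝ → (Fin d → ℝ) → ℝ)
    (hhm : Measurable fun p : ℝ × (Fin d → ℝ) => h p.1 p.2)
    (Ch : ℝ) (hhb : ∀ s y, |h s y| ≤ Ch)
    (ρ : ℝ → ℝ) (hρm : Measurable ρ)
    (hρnn : ∀ s > (0:ℝ), 0 ≤ ρ s)
    (hρpos : ∀ s ∈ Set.Ioc (0:ℝ) T, 0 < ρ s)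
    (hρint : IntegrableOn (fun s => 1 / ρ s) (Set.Ioc 0 T))
    (ν : Measure ℝ)
    (hν : ν = (volume.restrict (Set.Ioi 0)).withDensity fun s => ENNReal.ofReal (ρ s))
    (hνprob : IsProbabilityMeasure ν)
    (Fbar : ℝ → ℝ) (hFbar : ∀ t, Fbar t = ∫ s in Set.Ioi t, ρ s)
    (hFT : 0 < Fbar T) :
    ∫ s,
      (if s < T then
        (1 / ρ s ^ 2) * ∫ w, (h s (x + s • μ + σ₀ *ᵥ w)) ^ 2 ∂(gaussPi d s)
       else
        (1 / Fbar T ^ 2) * ∫ w, (g (x + T • μ + σ₀ *ᵥ w)) ^ 2 ∂(gaussPi d T)) ∂ν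
      ≤ Cg ^ 2 / Fbar T + Ch ^ 2 * ∫ s in Set.Ioc (0:ℝ) T, 1 / ρ s :=
  stmt12_general d σ₀ μ x T hT g Cg hgb h Ch hhb ρ hρm hρnn hρint ν hν Fbar hFbar hFT
end

section
/- Let $\varphi$ be Lipschitz with constant $L$, $W\sim N(0,I_d)$, $\sigma_0$ a matrix, and $t>0$. Define the ghost difference $\Delta := \varphi(x + \sqrt{t}\,\sigma_0 W) - \varphi(x)$. Then $\mathbb{E}[\Delta^2] \le L^2 \|\sigma_0\|^2 d\, t$, i.e. $\mathbb{E}[\Delta^2] = O(t)$ as $t\to 0$. Consequently $\mathbb{E}\Big[\Delta^2 \frac{(b\cdot(\sigma_0^\top)^{-1}\sqrt{t}\,W)^2}{t^2}\Big] \le \mathbb{E}\Big[L^2\|\sigma_0\|^2 |W|^2 \frac{(b\cdot(\sigma_0^\top)^{-1}W)^2}{t}\cdot t\Big]$ is bounded uniformly in $t \in (0,T]$. -/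
/-!
Lipschitz continuity of `φ` and the operator bound on `σ₀` give the pointwise estimate
`Δ(w)² ≤ L² S² t |w|²`, and `𝔼|W|² = d` because the coordinates of `W` are standard normal.
Multiplying by the squared Malliavin weight `(B √t / t)² = B² / t` cancels the factor `t`,
leaving a degree-four polynomial in `W`, which is integrable since Gaussian coordinates have
moments of all orders.
-/

open MeasureTheory ProbabilityTheory Matrix

open scoped NNReal ENNReal

lemma sq_le_of_abs_le_mul_sqrt {a L Q : ℝ} (h : |a| ≤ L * √Q) (hQ : 0 ≤ Q) :
    a ^ 2 ≤ L ^ 2 * Q := by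
  calc a ^ 2 = |a| ^ 2 := (sq_abs a).symm
    _ ≤ (L * √Q) ^ 2 := pow_le_pow_left₀ (abs_nonneg a) h 2
    _ = L ^ 2 * Q := by rw [mul_pow, Real.sq_sqrt hQ]

lemma sq_sub_le_of_lipschitz_of_mulVec_le {d : ℕ} {σ₀ : Matrix (Fin d) (Fin d) ℝ} {S L : ℝ}
    {φ : (Fin d → ℝ) → ℝ}
    (hσS : ∀ v : Fin d → ℝ, ∑ i, ((σ₀ *ᵥ v) i) ^ 2 ≤ S ^ 2 * ∑ i, (v i) ^ 2)
    (hLip : ∀ y z, |φ y - φ z| ≤ L * √(∑ i, (y i - z i) ^ 2))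
    (x : Fin d → ℝ) {t : ℝ} (ht : 0 ≤ t) (w : Fin d → ℝ) :
    (φ (x + √t • (σ₀ *ᵥ w)) - φ x) ^ 2 ≤ L ^ 2 * S ^ 2 * t * ∑ i, w i ^ 2 := by
  have hincr : ∑ i, ((x + √t • (σ₀ *ᵥ w)) i - x i) ^ 2 = t * ∑ i, ((σ₀ *ᵥ w) i) ^ 2 := by
    simp only [Pi.add_apply, Pi.smul_apply, smul_eq_mul, add_sub_cancel_left, mul_pow,
      Real.sq_sqrt ht, Finset.mul_sum]
  calc (φ (x + √t • (σ₀ *ᵥ w)) - φ x) ^ 2 ≤ L ^ 2 * (t * ∑ i, ((σ₀ *ᵥ w) i) ^ 2) := by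
        rw [← hincr]
        exact sq_le_of_abs_le_mul_sqrt (hLip _ x) (by positivity)
    _ ≤ L ^ 2 * (t * (S ^ 2 * ∑ i, w i ^ 2)) := by gcongr; exact hσS w
    _ = L ^ 2 * S ^ 2 * t * ∑ i, w i ^ 2 := by ring

lemma mul_sq_mul_sqrt_div_le {a K B t : ℝ} (ht : 0 < t) (h : a ≤ K * t) :
    a * (B * √t / t) ^ 2 ≤ K * B ^ 2 := by
  have hweight : (B * √t / t) ^ 2 = B ^ 2 / t := by
    rw [div_pow, mul_pow, Real.sq_sqrt ht.le]
    field_simp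
  calc a * (B * √t / t) ^ 2 ≤ K * t * (B ^ 2 / t) := by
        rw [hweight]; gcongr
    _ = K * B ^ 2 := by field_simp

lemma integral_sq_gaussianReal (v : ℝ≥0) : ∫ x, x ^ 2 ∂gaussianReal 0 v = v := by
  simpa [variance_eq_integral measurable_id'.aemeasurable] using
    variance_fun_id_gaussianReal (μ := 0) (v := v)

instance ENNReal.holderTriple_four_four_two : ENNReal.HolderTriple 4 4 2 where
  inv_add_inv_eq_inv := by
    rw [← two_mul, show (4 : ℝ≥0∞) = 2 * 2 by norm_num, ENNReal.mul_inv (by simp) (by simp),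
      ← mul_assoc, ENNReal.mul_inv_cancel (by simp) (by simp), one_mul]

lemma measurePreserving_eval_gaussPi {d : ℕ} (s : ℝ) (i : Fin d) :
    MeasurePreserving (fun w => w i) (gaussPi d s) (gaussianReal 0 s.toNNReal) :=
  measurePreserving_eval _ i

lemma memLp_eval_gaussPi {d : ℕ} (s : ℝ) (i : Fin d) {p : ℝ≥0∞} (hp : p ≠ ∞) :
    MemLp (fun w => w i) p (gaussPi d s) :=
  (memLp_id_gaussianReal' p hp).comp_measurePreserving (measurePreserving_eval_gaussPi s i)

lemma integrable_sq_eval_gaussPi {d : ℕ} (s : ℝ) (i : Fin d) :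
    Integrable (fun w => w i ^ 2) (gaussPi d s) :=
  (memLp_eval_gaussPi s i (by simp)).integrable_sq

lemma integral_sum_sq_gaussPi (d : ℕ) {s : ℝ} (hs : 0 ≤ s) :
    ∫ w, ∑ i, w i ^ 2 ∂gaussPi d s = d * s := by
  rw [integral_finsetSum _ fun i _ => integrable_sq_eval_gaussPi s i]
  simp [gaussPi, integral_comp_eval (μ := fun _ : Fin d => gaussianReal 0 s.toNNReal)
    (f := fun x : ℝ => x ^ 2) (by fun_prop), integral_sq_gaussianReal, hs]

lemma integrable_sum_sq_mul_dotProduct_sq_gaussPi {d : ℕ} (s : ℝ) (v : Fin d → ℝ) :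
    Integrable (fun w => (∑ i, w i ^ 2) * (v ⬝ᵥ w) ^ 2) (gaussPi d s) := by
  have hv : MemLp (fun w => v ⬝ᵥ w) 4 (gaussPi d s) :=
    memLp_finsetSum _ fun j _ => (memLp_eval_gaussPi s j (by simp)).const_mul (v j)
  -- `(∑ i, w i ^ 2) * (v ⬝ᵥ w) ^ 2 = ∑ i, (w i * v ⬝ᵥ w) ^ 2`, each factor in `L²` by Hölder
  have key : ∀ i, MemLp (fun w => w i * v ⬝ᵥ w) 2 (gaussPi d s) := fun i =>
    hv.mul' (memLp_eval_gaussPi (p := 4) s i (by simp))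
  refine (integrable_finsetSum Finset.univ fun i _ => (key i).integrable_sq).congr
    (ae_of_all _ fun w => ?_)
  simp only [mul_pow, Finset.sum_mul]

theorem stmt13_general (d : ℕ) (σ₀ : Matrix (Fin d) (Fin d) ℝ)
    (S : ℝ)
    (hσS : ∀ v : Fin d → ℝ, ∑ i, ((σ₀ *ᵥ v) i) ^ 2 ≤ S ^ 2 * ∑ i, (v i) ^ 2)
    (L : ℝ)
    (φ : (Fin d → ℝ) → ℝ)
    (hLip : ∀ y z, |φ y - φ z| ≤ L * Real.sqrt (∑ i, (y i - z i) ^ 2))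
    (b x : Fin d → ℝ) (T t : ℝ) (ht : t ∈ Set.Ioc (0:ℝ) T)
    (Δ : (Fin d → ℝ) → ℝ)
    (hΔ : ∀ w, Δ w = φ (x + Real.sqrt t • (σ₀ *ᵥ w)) - φ x) :
    (∫ w, (Δ w) ^ 2 ∂(gaussPi d 1) ≤ L ^ 2 * S ^ 2 * d * t)
    ∧ (∫ w, (Δ w) ^ 2 * ((b ⬝ᵥ (σ₀ᵀ)⁻¹ *ᵥ w) * Real.sqrt t / t) ^ 2 ∂(gaussPi d 1)
        ≤ ∫ w, L ^ 2 * S ^ 2 * (∑ i, (w i) ^ 2) * (b ⬝ᵥ (σ₀ᵀ)⁻¹ *ᵥ w) ^ 2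
            ∂(gaussPi d 1)) := by
  obtain ⟨ht0, -⟩ := ht
  have hΔle : ∀ w, Δ w ^ 2 ≤ L ^ 2 * S ^ 2 * t * ∑ i, w i ^ 2 := fun w =>
    hΔ w ▸ sq_sub_le_of_lipschitz_of_mulVec_le hσS hLip x ht0.le w
  constructor
  · calc ∫ w, Δ w ^ 2 ∂gaussPi d 1 ≤ ∫ w, L ^ 2 * S ^ 2 * t * ∑ i, w i ^ 2 ∂gaussPi d 1 :=
          integral_mono_of_nonneg (ae_of_all _ fun w => sq_nonneg _)
            ((integrable_finsetSum _ fun i _ => integrable_sq_eval_gaussPi 1 i).const_mul _)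
            (ae_of_all _ hΔle)
      _ = L ^ 2 * S ^ 2 * d * t := by
          rw [integral_const_mul, integral_sum_sq_gaussPi d zero_le_one]
          ring
  · refine integral_mono_of_nonneg (ae_of_all _ fun w => by positivity) ?_
      (ae_of_all _ fun w => mul_sq_mul_sqrt_div_le ht0 ((hΔle w).trans_eq (by ring)))
    simp_rw [dotProduct_mulVec]
    exact ((integrable_sum_sq_mul_dotProduct_sq_gaussPi 1 _).const_mul (L ^ 2 * S ^ 2)).congr
      (ae_of_all _ fun w => by ring)

/-- Ghost-difference variance bound: for Lipschitz `φ`, the difference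
`Δ = φ(x + √t σ₀ W) - φ(x)` satisfies `𝔼[Δ²] ≤ L² ‖σ₀‖² d t = O(t)`, so the
renormalized Malliavin-weighted gradient estimator has second moment bounded
uniformly in `t ∈ (0,T]`. -/
theorem stmt13 (d : ℕ) (σ₀ : Matrix (Fin d) (Fin d) ℝ) (hσ : IsUnit σ₀.det)
    (S : ℝ) (hS : 0 ≤ S)
    (hσS : ∀ v : Fin d → ℝ, ∑ i, ((σ₀ *ᵥ v) i) ^ 2 ≤ S ^ 2 * ∑ i, (v i) ^ 2)
    (L : ℝ) (hL : 0 ≤ L)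
    (φ : (Fin d → ℝ) → ℝ) (hφm : Measurable φ)
    (hLip : ∀ y z, |φ y - φ z| ≤ L * Real.sqrt (∑ i, (y i - z i) ^ 2))
    (b x : Fin d → ℝ) (T t : ℝ) (ht : t ∈ Set.Ioc (0:ℝ) T)
    (Δ : (Fin d → ℝ) → ℝ)
    (hΔ : ∀ w, Δ w = φ (x + Real.sqrt t • (σ₀ *ᵥ w)) - φ x) :
    (∫ w, (Δ w) ^ 2 ∂(gaussPi d 1) ≤ L ^ 2 * S ^ 2 * d * t)
    ∧ (∫ w, (Δ w) ^ 2 * ((b ⬝ᵥ (σ₀ᵀ)⁻¹ *ᵥ w) * Real.sqrt t / t) ^ 2 ∂(gaussPi d 1)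
        ≤ ∫ w, L ^ 2 * S ^ 2 * (∑ i, (w i) ^ 2) * (b ⬝ᵥ (σ₀ᵀ)⁻¹ *ᵥ w) ^ 2
            ∂(gaussPi d 1)) :=
  stmt13_general d σ₀ S hσS L φ hLip b x T t ht Δ hΔ
end
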